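/- Let {P̂,Ŷ} be a k-partition-with-sinks and assume some worst-case scenario for {P̂,Ŷ} exists. Then there exists a worst-case scenario s* for {P̂,Ŷ} such that, writing P_d = {l_d,...,r_d} for the dominant part of {P̂,Ŷ} under s*, the restriction of s* to {l_d,...,r_d} is left-dominant or right-dominant on {l_d,...,r_d}. -/

import Mathlib

/-!
Start from any worst-case scenario `s` with dominant part `P_d = {l,…,r}`. If the left flow
dominates `Θ¹(P_d)` and is attained at vertex `i`, raise the weights on `{l,…,i}` to their upper
bounds and lower those on `{i+1,…,r}`; the right flow is treated symmetrically (and if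
`Θ¹(P_d) = 0`, lower the whole part). Calling `Δ` the total increase, `Θ¹(P_d)` grows by at least
`Δ`, whereas every interval sum of weights, hence every `k`-sink evacuation time and thus
`Θᵏ_opt`, grows by at most `Δ`. The other parts are untouched, so the new scenario is still
worst-case, `P_d` is still its dominant part, and on `P_d` it is left- or right-dominant.
-/

/-- Maximum of `f` over a finite set of indices, with the empty maximum being `0`. -/
noncomputable def maxOver (S : Finset ℕ) (f : ℕ → ℝ) : ℝ := S.fold max 0 f

/-- Left evacuation time to sink `x t` of the subpath starting at `x l`, under weights `w`. -/
noncomputable def thetaL (x : ℕ → ℝ) (τ : ℝ) (w : ℕ → ℝ) (l t : ℕ) : ℝ :=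
  maxOver (Finset.Ico l t) (fun i => (x t - x i) * τ + ∑ j ∈ Finset.Icc l i, w j)

/-- Right evacuation time to sink `x t` of the subpath ending at `x r`, under weights `w`. -/
noncomputable def thetaR (x : ℕ → ℝ) (τ : ℝ) (w : ℕ → ℝ) (t r : ℕ) : ℝ :=
  maxOver (Finset.Ioc t r) (fun i => (x i - x t) * τ + ∑ j ∈ Finset.Icc i r, w j)

/-- 1-sink evacuation time `Θ¹([x_l,x_r], x_t, w)`. -/
noncomputable def theta1 (x : ℕ → ℝ) (τ : ℝ) (w : ℕ → ℝ) (l t r : ℕ) : ℝ :=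
  max (thetaL x τ w l t) (thetaR x τ w t r)

/-- A scenario assigns each vertex a weight within its bounds. -/
def IsScenario (n : ℕ) (wlo whi : ℕ → ℝ) (s : ℕ → ℝ) : Prop :=
  ∀ i, i ≤ n → wlo i ≤ s i ∧ s i ≤ whi i

/-- A `k`-partition-with-sinks of the vertex set `{0,…,n}` into `k` consecutive
nonempty blocks `{l p, …, r p}` (`p ∈ {1,…,k}`) with a sink `t p` in each block. -/
structure KPartSinks (n k : ℕ) where
  l : ℕ → ℕ
  r : ℕ → ℕ
  t : ℕ → ℕ
  first : l 1 = 0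
  last : r k = n
  consec : ∀ p, 1 ≤ p → p < k → l (p + 1) = r p + 1
  block_nonempty : ∀ p, 1 ≤ p → p ≤ k → l p ≤ r p
  sink_lb : ∀ p, 1 ≤ p → p ≤ k → l p ≤ t p
  sink_ub : ∀ p, 1 ≤ p → p ≤ k → t p ≤ r p

/-- `k`-sink evacuation time `Θᵏ(P, {P̂,Ŷ}, w)`. -/
noncomputable def thetaK {n k : ℕ} (x : ℕ → ℝ) (τ : ℝ) (PY : KPartSinks n k) (w : ℕ → ℝ) : ℝ :=
  maxOver (Finset.Icc 1 k) (fun p => theta1 x τ w (PY.l p) (PY.t p) (PY.r p))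

/-- Optimal `k`-sink evacuation time `Θᵏ_opt(P, w)`. -/
noncomputable def thetaOpt (x : ℕ → ℝ) (τ : ℝ) (n k : ℕ) (w : ℕ → ℝ) : ℝ :=
  sInf {v : ℝ | ∃ PY : KPartSinks n k, thetaK x τ PY w = v}

/-- Regret `R({P̂,Ŷ}, w)`. -/
noncomputable def regret {n k : ℕ} (x : ℕ → ℝ) (τ : ℝ) (PY : KPartSinks n k) (w : ℕ → ℝ) : ℝ :=
  thetaK x τ PY w - thetaOpt x τ n k w

/-- Max-regret `R_max({P̂,Ŷ})`. -/
noncomputable def maxRegret {n k : ℕ} (x : ℕ → ℝ) (τ : ℝ) (wlo whi : ℕ → ℝ)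
    (PY : KPartSinks n k) : ℝ :=
  sSup {v : ℝ | ∃ s : ℕ → ℝ, IsScenario n wlo whi s ∧ regret x τ PY s = v}

/-- A worst-case scenario: a scenario attaining the max-regret. -/
def IsWorstCase {n k : ℕ} (x : ℕ → ℝ) (τ : ℝ) (wlo whi : ℕ → ℝ) (PY : KPartSinks n k)
    (s : ℕ → ℝ) : Prop :=
  IsScenario n wlo whi s ∧ regret x τ PY s = maxRegret x τ wlo whi PY

/-- `d` is the index of the dominant part of `{P̂,Ŷ}` under weights `w`:
the smallest index attaining `max_p Θ¹(P_p, y_p, w)`. -/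
def IsDominant {n k : ℕ} (x : ℕ → ℝ) (τ : ℝ) (PY : KPartSinks n k) (w : ℕ → ℝ) (d : ℕ) : Prop :=
  1 ≤ d ∧ d ≤ k ∧
  (∀ p, 1 ≤ p → p ≤ k →
    theta1 x τ w (PY.l p) (PY.t p) (PY.r p) ≤ theta1 x τ w (PY.l d) (PY.t d) (PY.r d)) ∧
  (∀ p, 1 ≤ p → p < d →
    theta1 x τ w (PY.l p) (PY.t p) (PY.r p) < theta1 x τ w (PY.l d) (PY.t d) (PY.r d))

/-- `R_{lr}(x_t)`: the max-regret of the subpath `[x_l,x_r]` as assumed dominant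
part with sink `x_t`. -/
noncomputable def Rsink (x : ℕ → ℝ) (τ : ℝ) (wlo whi : ℕ → ℝ) (n k : ℕ) (l r t : ℕ) : ℝ :=
  sSup {v : ℝ | ∃ s : ℕ → ℝ, IsScenario n wlo whi s ∧
    theta1 x τ s l t r - thetaOpt x τ n k s = v}

/-- `R_{lr}`: the minimax regret of the subpath `[x_l,x_r]` as assumed dominant part. -/
noncomputable def Rlr (x : ℕ → ℝ) (τ : ℝ) (wlo whi : ℕ → ℝ) (n k : ℕ) (l r : ℕ) : ℝ :=
  sInf {v : ℝ | ∃ t, l ≤ t ∧ t ≤ r ∧ Rsink x τ wlo whi n k l r t = v}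

/-- A partition of `{0,…,i}` into `q` consecutive nonempty blocks `{l p, …, r p}`. -/
def IsQPartition (q i : ℕ) (l r : ℕ → ℕ) : Prop :=
  l 1 = 0 ∧ r q = i ∧ (∀ p, 1 ≤ p → p < q → l (p + 1) = r p + 1) ∧
  (∀ p, 1 ≤ p → p ≤ q → l p ≤ r p)

/-- `M(q, i)`: the minimum over partitions of `{0,…,i}` into `q` consecutive
nonempty blocks of `max_p R_{l_p r_p}`. -/
noncomputable def Mreg (x : ℕ → ℝ) (τ : ℝ) (wlo whi : ℕ → ℝ) (n k : ℕ) (q i : ℕ) : ℝ :=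
  sInf {v : ℝ | ∃ lf rf : ℕ → ℕ, IsQPartition q i lf rf ∧
    maxOver (Finset.Icc 1 q) (fun p => Rlr x τ wlo whi n k (lf p) (rf p)) = v}

/-- Left-dominant scenario on `{l,…,r}`. -/
def LeftDominant (wlo whi s : ℕ → ℝ) (l r : ℕ) : Prop :=
  ∃ i, l ≤ i ∧ i ≤ r + 1 ∧ (∀ j, l ≤ j → j < i → s j = whi j) ∧
    (∀ j, i ≤ j → j ≤ r → s j = wlo j)

/-- Right-dominant scenario on `{l,…,r}`. -/
def RightDominant (wlo whi s : ℕ → ℝ) (l r : ℕ) : Prop :=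
  ∃ i, l ≤ i ∧ i ≤ r + 1 ∧ (∀ j, l ≤ j → j < i → s j = wlo j) ∧
    (∀ j, i ≤ j → j ≤ r → s j = whi j)

open Finset

section MaxOver

variable {S : Finset ℕ} {f : ℕ → ℝ}

lemma maxOver_nonneg : 0 ≤ maxOver S f :=
  (le_fold_max _).mpr (Or.inl le_rfl)

lemma le_maxOver {i : ℕ} (hi : i ∈ S) : f i ≤ maxOver S f :=
  (le_fold_max _).mpr (Or.inr ⟨i, hi, le_rfl⟩)

lemma maxOver_le {c : ℝ} (h0 : 0 ≤ c) (h : ∀ i ∈ S, f i ≤ c) : maxOver S f ≤ c :=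
  (fold_max_le c).mpr ⟨h0, h⟩

lemma exists_mem_maxOver_eq_of_pos (h : 0 < maxOver S f) : ∃ i ∈ S, maxOver S f = f i := by
  have hS : S.Nonempty := nonempty_iff_ne_empty.mpr (by rintro rfl; exact h.ne' fold_empty)
  obtain ⟨i, hi, hmax⟩ := S.exists_max_image f hS
  refine ⟨i, hi, le_antisymm ?_ (le_maxOver hi)⟩
  by_contra! hlt
  exact (max_lt h hlt).not_ge
    (maxOver_le (le_max_left 0 (f i)) fun j hj => (hmax j hj).trans (le_max_right 0 (f i)))

end MaxOver

section Theta1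

variable {x : ℕ → ℝ} {τ : ℝ} {w w' : ℕ → ℝ} {l t r : ℕ}

lemma theta1_nonneg : 0 ≤ theta1 x τ w l t r :=
  maxOver_nonneg.trans (le_max_left _ _)

lemma le_theta1_of_mem_Ico {i : ℕ} (hi : i ∈ Ico l t) :
    (x t - x i) * τ + ∑ j ∈ Icc l i, w j ≤ theta1 x τ w l t r :=
  (le_maxOver (f := fun i => (x t - x i) * τ + ∑ j ∈ Icc l i, w j) hi).trans (le_max_left _ _)

lemma le_theta1_of_mem_Ioc {i : ℕ} (hi : i ∈ Ioc t r) :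
    (x i - x t) * τ + ∑ j ∈ Icc i r, w j ≤ theta1 x τ w l t r :=
  (le_maxOver (f := fun i => (x i - x t) * τ + ∑ j ∈ Icc i r, w j) hi).trans (le_max_right _ _)

lemma theta1_le_add {Δ : ℝ} (hΔ : 0 ≤ Δ)
    (hsum : ∀ a b, ∑ j ∈ Icc a b, w' j ≤ ∑ j ∈ Icc a b, w j + Δ) :
    theta1 x τ w' l t r ≤ theta1 x τ w l t r + Δ := by
  have h0 : 0 ≤ theta1 x τ w l t r + Δ := add_nonneg theta1_nonneg hΔ
  refine max_le (maxOver_le h0 fun i hi => ?_) (maxOver_le h0 fun i hi => ?_)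
  · linarith [hsum l i, le_theta1_of_mem_Ico (x := x) (τ := τ) (w := w) (r := r) hi]
  · linarith [hsum i r, le_theta1_of_mem_Ioc (x := x) (τ := τ) (w := w) (l := l) hi]

lemma theta1_mono (hlt : l ≤ t) (htr : t ≤ r) (h : ∀ j ∈ Icc l r, w j ≤ w' j) :
    theta1 x τ w l t r ≤ theta1 x τ w' l t r := by
  refine max_le (maxOver_le theta1_nonneg fun i hi => ?_)
    (maxOver_le theta1_nonneg fun i hi => ?_)
  · refine le_trans ?_ (le_theta1_of_mem_Ico hi)
    have hi := mem_Ico.mp hi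
    gcongr with j hj
    exact h j (by grind)
  · refine le_trans ?_ (le_theta1_of_mem_Ioc hi)
    have hi := mem_Ioc.mp hi
    gcongr with j hj
    exact h j (by grind)

end Theta1

namespace KPartSinks

variable {n k : ℕ} (PY : KPartSinks n k)

lemma r_lt_l {p q : ℕ} (hp : 1 ≤ p) (hpq : p < q) (hq : q ≤ k) : PY.r p < PY.l q := by
  induction q, hpq using Nat.le_induction with
  | base => rw [PY.consec p hp (by omega)]; omega
  | succ q hpq ih =>
    rw [PY.consec q (by omega) (by omega)]
    have := PY.block_nonempty q (by omega) (by omega)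
    have := ih (by omega)
    omega

lemma r_le_n {p : ℕ} (hp : 1 ≤ p) (hpk : p ≤ k) : PY.r p ≤ n := by
  rcases hpk.lt_or_eq with hpk | rfl
  · have := PY.r_lt_l hp hpk le_rfl
    have := PY.block_nonempty k (by omega) le_rfl
    have := PY.last
    omega
  · exact PY.last.le

end KPartSinks

section Regret

variable {n k : ℕ} {x : ℕ → ℝ} {τ : ℝ} {wlo whi : ℕ → ℝ} (PY : KPartSinks n k)

lemma thetaK_nonneg {w : ℕ → ℝ} : 0 ≤ thetaK x τ PY w := maxOver_nonneg

lemma le_thetaK {w : ℕ → ℝ} {p : ℕ} (hp1 : 1 ≤ p) (hpk : p ≤ k) :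
    theta1 x τ w (PY.l p) (PY.t p) (PY.r p) ≤ thetaK x τ PY w :=
  le_maxOver (f := fun p => theta1 x τ w (PY.l p) (PY.t p) (PY.r p)) (mem_Icc.mpr ⟨hp1, hpk⟩)

lemma thetaK_le_add {w w' : ℕ → ℝ} {Δ : ℝ} (hΔ : 0 ≤ Δ)
    (hsum : ∀ a b, ∑ j ∈ Icc a b, w' j ≤ ∑ j ∈ Icc a b, w j + Δ) :
    thetaK x τ PY w' ≤ thetaK x τ PY w + Δ :=
  maxOver_le (add_nonneg (thetaK_nonneg PY) hΔ) fun _ hp =>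
    (theta1_le_add hΔ hsum).trans
      (add_le_add_left (le_thetaK PY (mem_Icc.mp hp).1 (mem_Icc.mp hp).2) Δ)

lemma thetaOpt_le_thetaK {w : ℕ → ℝ} : thetaOpt x τ n k w ≤ thetaK x τ PY w :=
  csInf_le ⟨0, by rintro v ⟨PY', rfl⟩; exact thetaK_nonneg PY'⟩ ⟨PY, rfl⟩

lemma thetaOpt_le_add {w w' : ℕ → ℝ} {Δ : ℝ} (hΔ : 0 ≤ Δ)
    (hsum : ∀ a b, ∑ j ∈ Icc a b, w' j ≤ ∑ j ∈ Icc a b, w j + Δ) :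
    thetaOpt x τ n k w' ≤ thetaOpt x τ n k w + Δ := by
  rcases isEmpty_or_nonempty (KPartSinks n k) with hE | ⟨⟨PY⟩⟩
  · simp only [thetaOpt, IsEmpty.exists_iff, Set.ofPred_false, Real.sInf_empty, zero_add, hΔ]
  rw [← sub_le_iff_le_add]
  refine le_csInf ⟨_, PY, rfl⟩ ?_
  rintro v ⟨PY', rfl⟩
  rw [sub_le_iff_le_add]
  exact (thetaOpt_le_thetaK PY').trans (thetaK_le_add PY' hΔ hsum)

lemma bddAbove_regret :
    BddAbove {v : ℝ | ∃ s : ℕ → ℝ, IsScenario n wlo whi s ∧ regret x τ PY s = v} := by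
  refine ⟨thetaK x τ PY whi, ?_⟩
  rintro v ⟨s, hs, rfl⟩
  have hK : thetaK x τ PY s ≤ thetaK x τ PY whi := by
    refine maxOver_le (thetaK_nonneg PY) fun p hp => ?_
    obtain ⟨hp1, hpk⟩ := mem_Icc.mp hp
    refine (theta1_mono (PY.sink_lb p hp1 hpk) (PY.sink_ub p hp1 hpk) fun j hj => ?_).trans
      (le_thetaK PY hp1 hpk)
    exact (hs j ((mem_Icc.mp hj).2.trans (PY.r_le_n hp1 hpk))).2
  have hOpt : 0 ≤ thetaOpt x τ n k s :=
    Real.sInf_nonneg (by rintro v ⟨PY', rfl⟩; exact thetaK_nonneg PY')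
  unfold regret
  linarith

lemma exists_isDominant (hk : 1 ≤ k) (w : ℕ → ℝ) : ∃ d, IsDominant x τ PY w d := by
  classical
  let f p := theta1 x τ w (PY.l p) (PY.t p) (PY.r p)
  have hmax : ∃ d, 1 ≤ d ∧ d ≤ k ∧ ∀ p, 1 ≤ p → p ≤ k → f p ≤ f d := by
    obtain ⟨d, hd, hdmax⟩ := (Icc 1 k).exists_max_image f ⟨1, mem_Icc.mpr ⟨le_rfl, hk⟩⟩
    exact ⟨d, (mem_Icc.mp hd).1, (mem_Icc.mp hd).2, fun p h1 h2 => hdmax p (mem_Icc.mpr ⟨h1, h2⟩)⟩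
  obtain ⟨hd1, hdk, hdmax⟩ := Nat.find_spec hmax
  refine ⟨Nat.find hmax, hd1, hdk, hdmax, fun p hp1 hpd => lt_of_not_ge fun hle => ?_⟩
  exact Nat.find_min hmax hpd ⟨hp1, by omega, fun q hq1 hqk => (hdmax q hq1 hqk).trans hle⟩

lemma IsWorstCase.of_gain_ge {s s' : ℕ → ℝ} {d : ℕ} {Δ : ℝ}
    (hws : IsWorstCase x τ wlo whi PY s) (hdom : IsDominant x τ PY s d)
    (hs' : IsScenario n wlo whi s') (hΔ : 0 ≤ Δ)
    (hsum : ∀ a b, ∑ j ∈ Icc a b, s' j ≤ ∑ j ∈ Icc a b, s j + Δ)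
    (hgain : theta1 x τ s (PY.l d) (PY.t d) (PY.r d) + Δ ≤
      theta1 x τ s' (PY.l d) (PY.t d) (PY.r d))
    (hout : ∀ j, j ∉ Icc (PY.l d) (PY.r d) → s' j = s j) :
    IsWorstCase x τ wlo whi PY s' ∧ IsDominant x τ PY s' d := by
  obtain ⟨hd1, hdk, hmax, hfirst⟩ := hdom
  have hother : ∀ p, 1 ≤ p → p ≤ k → p ≠ d →
      theta1 x τ s' (PY.l p) (PY.t p) (PY.r p) = theta1 x τ s (PY.l p) (PY.t p) (PY.r p) := by
    intro p hp1 hpk hpd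
    have hdisj : ∀ j ∈ Icc (PY.l p) (PY.r p), s' j = s j := fun j hj => hout j fun hj' => by
      have := mem_Icc.mp hj; have := mem_Icc.mp hj'
      rcases Nat.lt_or_gt_of_ne hpd with h | h
      · have := PY.r_lt_l hp1 h hdk; omega
      · have := PY.r_lt_l hd1 h hpk; omega
    exact le_antisymm
      (theta1_mono (PY.sink_lb p hp1 hpk) (PY.sink_ub p hp1 hpk) fun j hj => (hdisj j hj).le)
      (theta1_mono (PY.sink_lb p hp1 hpk) (PY.sink_ub p hp1 hpk) fun j hj => (hdisj j hj).ge)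
  have hKs : thetaK x τ PY s = theta1 x τ s (PY.l d) (PY.t d) (PY.r d) :=
    le_antisymm (maxOver_le theta1_nonneg fun p hp => hmax p (mem_Icc.mp hp).1 (mem_Icc.mp hp).2)
      (le_thetaK PY hd1 hdk)
  have hreg : regret x τ PY s ≤ regret x τ PY s' := by
    have := le_thetaK PY hd1 hdk (x := x) (τ := τ) (w := s')
    have := thetaOpt_le_add (n := n) (k := k) (x := x) (τ := τ) hΔ hsum
    unfold regret
    linarith
  have hgrow : theta1 x τ s (PY.l d) (PY.t d) (PY.r d) ≤
      theta1 x τ s' (PY.l d) (PY.t d) (PY.r d) := by linarith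
  refine ⟨⟨hs', le_antisymm (le_csSup (bddAbove_regret PY) ⟨s', hs', rfl⟩) (hws.2 ▸ hreg)⟩,
    hd1, hdk, fun p hp1 hpk => ?_, fun p hp1 hpd => ?_⟩
  · rcases eq_or_ne p d with rfl | hpd
    · exact le_rfl
    · exact (hother p hp1 hpk hpd).trans_le ((hmax p hp1 hpk).trans hgrow)
  · rw [hother p hp1 (by omega) hpd.ne]
    exact (hfirst p hp1 hpd).trans_le hgrow

end Regret

section Extremize

def extremize (A : Finset ℕ) (l r : ℕ) (wlo whi s : ℕ → ℝ) (j : ℕ) : ℝ :=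
  if j ∈ A then whi j else if j ∈ Icc l r then wlo j else s j

variable {A : Finset ℕ} {l r : ℕ} {wlo whi s : ℕ → ℝ}

lemma extremize_of_not_mem (hA : A ⊆ Icc l r) {j : ℕ} (hj : j ∉ Icc l r) :
    extremize A l r wlo whi s j = s j := by
  rw [extremize, if_neg fun h => hj (hA h), if_neg hj]

lemma isScenario_extremize {n : ℕ} (hs : IsScenario n wlo whi s)
    (hw : ∀ i ≤ n, wlo i ≤ whi i) : IsScenario n wlo whi (extremize A l r wlo whi s) := by
  intro j hj
  unfold extremize
  split_ifs
  · exact ⟨hw j hj, le_rfl⟩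
  · exact ⟨le_rfl, hw j hj⟩
  · exact hs j hj

lemma sum_extremize_le (hA : A ⊆ Icc l r) (hs : ∀ j ∈ Icc l r, wlo j ≤ s j ∧ s j ≤ whi j)
    (I : Finset ℕ) :
    ∑ j ∈ I, extremize A l r wlo whi s j ≤ ∑ j ∈ I, s j + ∑ j ∈ A, (whi j - s j) := by
  have hpt : ∀ j ∈ I, extremize A l r wlo whi s j ≤ s j + if j ∈ A then whi j - s j else 0 := by
    intro j _
    unfold extremize
    split_ifs with hjA hjI
    · linarith
    · linarith [(hs j hjI).1]
    · linarith
  calc ∑ j ∈ I, extremize A l r wlo whi s j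
      ≤ ∑ j ∈ I, s j + ∑ j ∈ I ∩ A, (whi j - s j) := by
        rw [← sum_ite_mem, ← sum_add_distrib]; exact sum_le_sum hpt
    _ ≤ ∑ j ∈ I, s j + ∑ j ∈ A, (whi j - s j) :=
        add_le_add_right (sum_le_sum_of_subset_of_nonneg inter_subset_right
          fun j hj _ => sub_nonneg.mpr (hs j (hA hj)).2) _

lemma sum_extremize_self :
    ∑ j ∈ A, extremize A l r wlo whi s j = ∑ j ∈ A, s j + ∑ j ∈ A, (whi j - s j) := by
  rw [← sum_add_distrib]
  exact sum_congr rfl fun j hj => by rw [extremize, if_pos hj]; ring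

lemma leftDominant_extremize {i : ℕ} (hli : l ≤ i) (hir : i ≤ r + 1) :
    LeftDominant wlo whi (extremize (Ico l i) l r wlo whi s) l r := by
  refine ⟨i, hli, hir, fun j hlj hji => ?_, fun j hij hjr => ?_⟩
  · rw [extremize, if_pos (mem_Ico.mpr ⟨hlj, hji⟩)]
  · rw [extremize, if_neg (by simp; omega), if_pos (mem_Icc.mpr ⟨by omega, hjr⟩)]

lemma rightDominant_extremize {i : ℕ} (hli : l ≤ i) (hir : i ≤ r + 1) :
    RightDominant wlo whi (extremize (Icc i r) l r wlo whi s) l r := by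
  refine ⟨i, hli, hir, fun j hlj hji => ?_, fun j hij hjr => ?_⟩
  · rw [extremize, if_neg (by simp; omega), if_pos (mem_Icc.mpr ⟨hlj, by omega⟩)]
  · rw [extremize, if_pos (mem_Icc.mpr ⟨hij, hjr⟩)]

variable {x : ℕ → ℝ} {τ : ℝ} {t : ℕ}

lemma theta1_add_le_extremize_left {i : ℕ} (hi : i ∈ Ico l t)
    (hmax : theta1 x τ s l t r = (x t - x i) * τ + ∑ j ∈ Icc l i, s j) :
    theta1 x τ s l t r + ∑ j ∈ Icc l i, (whi j - s j) ≤
      theta1 x τ (extremize (Icc l i) l r wlo whi s) l t r :=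
  calc _ = (x t - x i) * τ + ∑ j ∈ Icc l i, extremize (Icc l i) l r wlo whi s j := by
        rw [hmax, sum_extremize_self]; ring
    _ ≤ _ := le_theta1_of_mem_Ico hi

lemma theta1_add_le_extremize_right {i : ℕ} (hi : i ∈ Ioc t r)
    (hmax : theta1 x τ s l t r = (x i - x t) * τ + ∑ j ∈ Icc i r, s j) :
    theta1 x τ s l t r + ∑ j ∈ Icc i r, (whi j - s j) ≤
      theta1 x τ (extremize (Icc i r) l r wlo whi s) l t r :=
  calc _ = (x i - x t) * τ + ∑ j ∈ Icc i r, extremize (Icc i r) l r wlo whi s j := by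
        rw [hmax, sum_extremize_self]; ring
    _ ≤ _ := le_theta1_of_mem_Ioc hi

end Extremize

lemma IsWorstCase.extremize_of_gain_ge {n k : ℕ} {x : ℕ → ℝ} {τ : ℝ} {wlo whi s : ℕ → ℝ}
    {PY : KPartSinks n k} {d : ℕ} {A : Finset ℕ}
    (hws : IsWorstCase x τ wlo whi PY s) (hdom : IsDominant x τ PY s d)
    (hw : ∀ i ≤ n, wlo i ≤ whi i) (hA : A ⊆ Icc (PY.l d) (PY.r d))
    (hgain : theta1 x τ s (PY.l d) (PY.t d) (PY.r d) + ∑ j ∈ A, (whi j - s j) ≤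
      theta1 x τ (extremize A (PY.l d) (PY.r d) wlo whi s) (PY.l d) (PY.t d) (PY.r d)) :
    IsWorstCase x τ wlo whi PY (extremize A (PY.l d) (PY.r d) wlo whi s) ∧
      IsDominant x τ PY (extremize A (PY.l d) (PY.r d) wlo whi s) d := by
  have hs : ∀ j ∈ Icc (PY.l d) (PY.r d), wlo j ≤ s j ∧ s j ≤ whi j := fun j hj =>
    hws.1 j ((mem_Icc.mp hj).2.trans (PY.r_le_n hdom.1 hdom.2.1))
  exact hws.of_gain_ge PY hdom (isScenario_extremize hws.1 hw)
    (sum_nonneg fun j hj => sub_nonneg.mpr (hs j (hA hj)).2)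
    (fun a b => sum_extremize_le hA hs (Icc a b)) hgain fun j hj => extremize_of_not_mem hA hj

theorem stmt_1_general (n k : ℕ) (x : ℕ → ℝ) (τ : ℝ) (wlo whi : ℕ → ℝ)
    (hw : ∀ i, i ≤ n → 0 < wlo i ∧ wlo i ≤ whi i) (hk : 1 ≤ k)
    (PY : KPartSinks n k)
    (hex : ∃ s, IsWorstCase x τ wlo whi PY s) :
    ∃ s d, IsWorstCase x τ wlo whi PY s ∧ IsDominant x τ PY s d ∧
      (LeftDominant wlo whi s (PY.l d) (PY.r d) ∨
       RightDominant wlo whi s (PY.l d) (PY.r d)) := by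
  obtain ⟨s, hws⟩ := hex
  obtain ⟨d, hdom⟩ := exists_isDominant PY hk s (x := x) (τ := τ)
  have hw' : ∀ i ≤ n, wlo i ≤ whi i := fun i hi => (hw i hi).2
  have hlt := PY.sink_lb d hdom.1 hdom.2.1
  have htr := PY.sink_ub d hdom.1 hdom.2.1
  rcases le_or_gt (thetaR x τ s (PY.t d) (PY.r d)) (thetaL x τ s (PY.l d) (PY.t d)) with hRL | hLR
  · rcases maxOver_nonneg.eq_or_lt with hL0 | hLpos
    · have h0 : theta1 x τ s (PY.l d) (PY.t d) (PY.r d) = 0 := (max_eq_left hRL).trans hL0.symm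
      obtain ⟨hws', hdom'⟩ := hws.extremize_of_gain_ge (A := Ico (PY.l d) (PY.l d)) hdom hw'
        (by simp) (by simpa [h0] using theta1_nonneg)
      exact ⟨_, d, hws', hdom', Or.inl (leftDominant_extremize le_rfl (by omega))⟩
    · obtain ⟨i, hi, hLi⟩ := exists_mem_maxOver_eq_of_pos hLpos
      have hi' := mem_Ico.mp hi
      obtain ⟨hws', hdom'⟩ := hws.extremize_of_gain_ge (A := Ico (PY.l d) (i + 1)) hdom hw'
        (fun j hj => by simp only [mem_Ico, mem_Icc] at hj ⊢; omega)
        (by rw [Ico_add_one_right_eq_Icc]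
            exact theta1_add_le_extremize_left hi ((max_eq_left hRL).trans hLi))
      exact ⟨_, d, hws', hdom', Or.inl (leftDominant_extremize (by omega) (by omega))⟩
  · obtain ⟨i, hi, hRi⟩ := exists_mem_maxOver_eq_of_pos (maxOver_nonneg.trans_lt hLR)
    have hi' := mem_Ioc.mp hi
    obtain ⟨hws', hdom'⟩ := hws.extremize_of_gain_ge (A := Icc i (PY.r d)) hdom hw'
      (fun j hj => by simp only [mem_Icc] at hj ⊢; omega)
      (theta1_add_le_extremize_right hi ((max_eq_right hLR.le).trans hRi))
    exact ⟨_, d, hws', hdom', Or.inr (rightDominant_extremize (by omega) (by omega))⟩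

/-- there is a worst-case scenario whose restriction to its
dominant part is left-dominant or right-dominant. -/
theorem stmt_1 (n k : ℕ) (x : ℕ → ℝ) (τ : ℝ) (wlo whi : ℕ → ℝ)
    (hx : ∀ i, i < n → x i < x (i + 1)) (hτ : 0 < τ)
    (hw : ∀ i, i ≤ n → 0 < wlo i ∧ wlo i ≤ whi i) (hk : 1 ≤ k)
    (PY : KPartSinks n k)
    (hex : ∃ s, IsWorstCase x τ wlo whi PY s) :
    ∃ s d, IsWorstCase x τ wlo whi PY s ∧ IsDominant x τ PY s d ∧
      (LeftDominant wlo whi s (PY.l d) (PY.r d) ∨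
       RightDominant wlo whi s (PY.l d) (PY.r d)) :=
  stmt_1_general n k x τ wlo whi hw hk PY hex
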